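/- arXiv:1407.5843 — 2 statements merged into one kernel-verified Lean document; each statement's English description precedes it below -/
import Mathlib

section
/- Let r ≥ 2 and let a_1,…,a_n be positive integers none divisible by r. Let h = gcd(∏_{j=1}^n (1 − t^{a_j}), (1−t^r)/(1−t)) in ℚ[t]. Define σ_i = (1/r) · Σ_{ε ∈ μ_r, ε^{a_j} ≠ 1 for all j} ε^i / ∏_{j=1}^n (1 − ε^{-a_j}). Then (Σ_{i=0}^{r−1} σ_i t^i) · ∏_{j=1}^n (1 − t^{a_j}) ≡ 1 modulo (1 − t^r)/(h·(1−t)) in ℂ[t]. -/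
/-!
Let `Φ = 1 + t + ⋯ + t^{r-1}`, `P = ∏_j (1 - t^{a_j})` and `S = Σ_i σ_i t^i`. Since
`Φ ∣ t^r - 1` is separable, so is the modulus `D = Φ / gcd(P, Φ)`, and it suffices to check that
`S · P - 1` vanishes at every root `ζ` of `D`. Such a `ζ` is an `r`-th root of unity, and
`P(ζ) ≠ 0`: otherwise `t - ζ` would divide both `gcd(P, Φ)` and `D`, so its square would divide
`Φ`. Hence `ζ⁻¹` is one of the `ε` in the definition of `σ_i`, and by orthogonality of the
characters `i ↦ ε^i` of `ℤ/r`, `S(ζ) = 1 / ∏_j (1 - ζ^{a_j}) = 1 / P(ζ)`.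
-/

open Polynomial Finset

namespace Polynomial

variable {K : Type*} [Field K]

theorem Separable.dvd_of_splits_of_isRoot {f g : K[X]} (hsplit : f.Splits) (hsep : f.Separable)
    (hroot : ∀ x, f.IsRoot x → g.IsRoot x) : f ∣ g := by
  rcases eq_or_ne g 0 with rfl | hg
  · exact dvd_zero f
  refine hsplit.dvd_of_roots_le_roots hsep.ne_zero ?_
  rw [Multiset.le_iff_subset (nodup_roots hsep)]
  intro x hx
  exact (mem_roots hg).2 (hroot x ((mem_roots hsep.ne_zero).1 hx))

theorem Separable.not_isRoot_of_isRoot_div_gcd [DecidableEq K[X]] {F P : K[X]}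
    (hF : F.Separable) {ζ : K} (hζ : (F / EuclideanDomain.gcd P F).IsRoot ζ) : ¬ P.IsRoot ζ := by
  intro hP
  set g := EuclideanDomain.gcd P F
  have hg : g ≠ 0 := fun h => hF.ne_zero (EuclideanDomain.gcd_eq_zero_iff.1 h).2
  have hF_eq : g * (F / g) = F :=
    EuclideanDomain.mul_div_cancel' hg (EuclideanDomain.gcd_dvd_right P F)
  have hζF : F.IsRoot ζ := hζ.dvd (Dvd.intro_left g hF_eq)
  have hζg : X - C ζ ∣ g := EuclideanDomain.dvd_gcd (dvd_iff_isRoot.2 hP) (dvd_iff_isRoot.2 hζF)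
  have hsq : (X - C ζ) * (X - C ζ) ∣ F := hF_eq ▸ mul_dvd_mul hζg (dvd_iff_isRoot.2 hζ)
  exact not_isUnit_X_sub_C ζ (hF.squarefree _ hsq)

variable {r : ℕ}

theorem separable_geom_sum_X (hr : (r : K) ≠ 0) : (∑ i ∈ range r, (X : K[X]) ^ i).Separable :=
  (X_pow_sub_one_separable_iff.2 hr).of_dvd ⟨X - 1, (geom_sum_mul X r).symm⟩

theorem pow_eq_one_of_isRoot_geom_sum_X {ζ : K} (hζ : (∑ i ∈ range r, (X : K[X]) ^ i).IsRoot ζ) :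
    ζ ^ r = 1 := by
  have := hζ.dvd ⟨X - 1, (geom_sum_mul (X : K[X]) r).symm⟩
  simpa [IsRoot, sub_eq_zero] using this

end Polynomial

section RootsOfUnity

variable {K : Type*} [Field K] {r : ℕ}

theorem geom_sum_eq_ite_of_pow_eq_one [DecidableEq K] {ω : K} (hω : ω ^ r = 1) :
    ∑ i ∈ range r, ω ^ i = if ω = 1 then (r : K) else 0 := by
  split_ifs with h
  · simp [h]
  · rw [geom_sum_eq h, hω, sub_self, zero_div]

theorem sum_range_dft_mul_pow_eq_ite [DecidableEq K] (hr : (r : K) ≠ 0) {T : Finset K}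
    (hT : ∀ ε ∈ T, ε ^ r = 1) (c : K → K) {ζ : K} (hζ : ζ ^ r = 1) :
    ∑ i ∈ range r, (1 / r * ∑ ε ∈ T, ε ^ i * c ε) * ζ ^ i = if ζ⁻¹ ∈ T then c ζ⁻¹ else 0 := by
  have hζ0 : ζ ≠ 0 := (IsUnit.of_pow_eq_one hζ (by rintro rfl; simp at hr)).ne_zero
  have hinner : ∀ ε ∈ T, ∑ i ∈ range r, 1 / r * (ε ^ i * c ε) * ζ ^ i
      = if ε = ζ⁻¹ then c ε else 0 := by
    intro ε hε
    calc ∑ i ∈ range r, 1 / r * (ε ^ i * c ε) * ζ ^ i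
        = 1 / r * c ε * ∑ i ∈ range r, (ε * ζ) ^ i := by
          rw [mul_sum]; exact sum_congr rfl fun i _ => by ring
      _ = if ε = ζ⁻¹ then c ε else 0 := by
          rw [geom_sum_eq_ite_of_pow_eq_one (by rw [mul_pow, hT ε hε, hζ, one_mul])]
          simp only [mul_eq_one_iff_eq_inv₀ hζ0]
          split_ifs
          · field_simp
          · rw [mul_zero]
  simp_rw [mul_sum, sum_mul]
  rw [sum_comm, sum_congr rfl hinner, sum_ite_eq']

end RootsOfUnity

open Classical in
theorem dedekind_inverse_mod_general_general (r n : ℕ) (hr : 2 ≤ r) (a : Fin n → ℕ) :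
    ((∑ i ∈ Finset.range r, (X : ℂ[X]) ^ i) /
        EuclideanDomain.gcd (∏ j, (1 - (X : ℂ[X]) ^ (a j)))
          (∑ i ∈ Finset.range r, (X : ℂ[X]) ^ i)) ∣
      ((∑ i ∈ Finset.range r,
          Polynomial.C ((1 / r : ℂ) *
            ∑ ε ∈ (nthRootsFinset r (1 : ℂ)).filter (fun ε => ∀ j, ε ^ (a j) ≠ 1),
              ε ^ i / ∏ j, (1 - ε ^ (-(a j : ℤ)))) * X ^ i) *
        ∏ j, (1 - (X : ℂ[X]) ^ (a j)) - 1) := by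
  have hr_pos : 0 < r := by omega
  have hr0 : (r : ℂ) ≠ 0 := Nat.cast_ne_zero.2 hr_pos.ne'
  have hΦ := separable_geom_sum_X hr0
  have hDΦ := EuclideanDomain.div_dvd_of_dvd (EuclideanDomain.gcd_dvd_right
    (∏ j, (1 - (X : ℂ[X]) ^ (a j))) (∑ i ∈ Finset.range r, (X : ℂ[X]) ^ i))
  refine (hΦ.of_dvd hDΦ).dvd_of_splits_of_isRoot (IsAlgClosed.splits _) fun ζ hζ => ?_
  have hζr : ζ ^ r = 1 := pow_eq_one_of_isRoot_geom_sum_X (hζ.dvd hDΦ)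
  have hPζ : ∀ j, ζ ^ a j ≠ 1 := by
    have := hΦ.not_isRoot_of_isRoot_div_gcd hζ
    simp only [IsRoot, eval_prod, eval_sub, eval_one, eval_pow, eval_X, prod_eq_zero_iff,
      mem_univ, true_and, sub_eq_zero, not_exists] at this
    exact fun j h => this j h.symm
  have hmem : ζ⁻¹ ∈ (nthRootsFinset r (1 : ℂ)).filter (fun ε => ∀ j, ε ^ (a j) ≠ 1) := by
    simpa [mem_nthRootsFinset hr_pos, hζr] using hPζ
  simp only [IsRoot, eval_sub, eval_mul, eval_one, eval_finsetSum, eval_C, eval_pow, eval_X,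
    eval_prod, div_eq_mul_inv _ (∏ j, _)]
  rw [sum_range_dft_mul_pow_eq_ite hr0 (fun ε hε => ((mem_nthRootsFinset hr_pos 1).1
    (mem_filter.1 hε).1)) _ hζr, if_pos hmem]
  simp only [inv_zpow', neg_neg, zpow_natCast]
  rw [inv_mul_cancel₀ (prod_ne_zero_iff.2 fun j _ => sub_ne_zero.2 (hPζ j).symm), sub_self]

open Classical in
/-- For `r ≥ 2` and positive `a_1, …, a_n` none divisible by `r`, with
`h = gcd(∏_j (1 - t^{a_j}), (1-t^r)/(1-t))`, the polynomial `Σ_{i<r} σ_i t^i` is an inverse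
of `∏_j (1 - t^{a_j})` modulo `(1-t^r)/(h(1-t))` in `ℂ[t]`, where
`σ_i = (1/r) Σ_{ε ∈ μ_r, ε^{a_j} ≠ 1 ∀ j} ε^i / ∏_j (1 - ε^{-a_j})`. -/
theorem dedekind_inverse_mod_general (r n : ℕ) (hr : 2 ≤ r) (a : Fin n → ℕ)
    (ha : ∀ j, 0 < a j) (hra : ∀ j, ¬ r ∣ a j) :
    ((∑ i ∈ Finset.range r, (X : ℂ[X]) ^ i) /
        EuclideanDomain.gcd (∏ j, (1 - (X : ℂ[X]) ^ (a j)))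
          (∑ i ∈ Finset.range r, (X : ℂ[X]) ^ i)) ∣
      ((∑ i ∈ Finset.range r,
          Polynomial.C ((1 / r : ℂ) *
            ∑ ε ∈ (nthRootsFinset r (1 : ℂ)).filter (fun ε => ∀ j, ε ^ (a j) ≠ 1),
              ε ^ i / ∏ j, (1 - ε ^ (-(a j : ℤ)))) * X ^ i) *
        ∏ j, (1 - (X : ℂ[X]) ^ (a j)) - 1) :=
  dedekind_inverse_mod_general_general r n hr a
end

section
/- Let r ≥ 2 and let a_1, …, a_{n−1} be positive integers coprime to r. For 1 ≤ j ≤ n−1 define δ_{i,j} = (1/r)·Σ_{ε ∈ μ_r, ε ≠ 1} ε^i (1 + ε^{-a_j}) / ((1 − ε^{-a_j})^2 ∏_{l ≠ j}(1 − ε^{-a_l})). Then the polynomial Σ_{i=0}^{r−1} δ_{i,j} t^i satisfies (Σ_{i=0}^{r−1} δ_{i,j} t^i) · (1 − t^{a_1}) ⋯ (1 − t^{a_j})^2 ⋯ (1 − t^{a_{n−1}}) ≡ 1 + t^{a_j} modulo (1 − t^r)/(1 − t) in ℂ[t]. -/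
/-!
Since `∑_{i<r} t^i = ∏_{ζ ∈ μ_r, ζ ≠ 1} (t - ζ)` has simple roots, it suffices to check the
congruence at each such `ζ`. Summing the geometric series `∑_{i<r} (εζ)^i` (which vanishes unless
`ε = ζ⁻¹`), the polynomial `∑_i δ_{i,j} t^i` takes at `ζ` the value of the summand at `ε = ζ⁻¹`,
namely `(1 + ζ^{a_j}) / ((1 - ζ^{a_j})² ∏_{l ≠ j} (1 - ζ^{a_l}))`. Coprimality of `a_l` and `r`
makes every `1 - ζ^{a_l}` nonzero, so multiplying by the product leaves `1 + ζ^{a_j}`.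
-/

open Polynomial Finset

theorem geom_sum_eq_zero_of_pow_eq_one {K : Type*} [Field K] {x : K} {r : ℕ} (hx : x ^ r = 1)
    (hx1 : x ≠ 1) : ∑ i ∈ range r, x ^ i = 0 := by
  rw [geom_sum_eq hx1, hx, sub_self, zero_div]

theorem sum_range_sum_pow_mul_mul_pow {K : Type*} [Field K] {r : ℕ} {s : Finset K}
    (hs : ∀ ε ∈ s, ε ^ r = 1) (f : K → K) {ζ : K} (hζ : ζ ^ r = 1) (hζ0 : ζ ≠ 0)
    (hζs : ζ⁻¹ ∈ s) :
    ∑ i ∈ range r, (∑ ε ∈ s, ε ^ i * f ε) * ζ ^ i = r * f ζ⁻¹ :=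
  calc ∑ i ∈ range r, (∑ ε ∈ s, ε ^ i * f ε) * ζ ^ i
      = ∑ ε ∈ s, (∑ i ∈ range r, (ε * ζ) ^ i) * f ε := by
        simp_rw [sum_mul, mul_pow, mul_right_comm]
        exact sum_comm
    _ = (∑ i ∈ range r, (ζ⁻¹ * ζ) ^ i) * f ζ⁻¹ := by
        refine sum_eq_single_of_mem _ hζs fun ε hε hne => ?_
        have hεζ : ε * ζ ≠ 1 := fun h => hne (eq_inv_of_mul_eq_one_left h)
        rw [geom_sum_eq_zero_of_pow_eq_one (by rw [mul_pow, hs ε hε, hζ, one_mul]) hεζ, zero_mul]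
    _ = r * f ζ⁻¹ := by simp [hζ0]

theorem Polynomial.prod_X_sub_C_dvd_of_isRoot {R : Type*} [CommRing R] [IsDomain R]
    {s : Finset R} {p : R[X]} (h : ∀ x ∈ s, p.IsRoot x) : ∏ x ∈ s, (X - C x) ∣ p := by
  rcases eq_or_ne p 0 with rfl | hp
  · exact dvd_zero _
  · exact (Multiset.prod_X_sub_C_dvd_iff_le_roots hp s.val).mpr <|
      (Multiset.le_iff_subset s.nodup).mpr fun x hx => (mem_roots hp).mpr (h x hx)

theorem geom_sum_X_eq_prod_nthRootsFinset_erase_one {R : Type*} [CommRing R] [IsDomain R]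
    [DecidableEq R] {r : ℕ} (hr : 0 < r) {ζ : R} (hζ : IsPrimitiveRoot ζ r) :
    ∑ i ∈ range r, (X : R[X]) ^ i = ∏ ε ∈ (nthRootsFinset r (1 : R)).erase 1, (X - C ε) := by
  refine mul_left_cancel₀ (X_sub_C_ne_zero 1) ?_
  rw [mul_prod_erase _ (fun ε => X - C ε) (one_mem_nthRootsFinset hr),
    ← X_pow_sub_one_eq_prod hr hζ, map_one, mul_comm, geom_sum_mul]

theorem delta_inverse_mod_general (r m : ℕ) (hr : 2 ≤ r) (a : Fin m → ℕ)
    (hcop : ∀ l, Nat.Coprime (a l) r) (j : Fin m) :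
    (∑ i ∈ Finset.range r, (X : ℂ[X]) ^ i) ∣
      ((∑ i ∈ Finset.range r,
          Polynomial.C ((1 / r : ℂ) *
            ∑ ε ∈ (nthRootsFinset r (1 : ℂ)).filter (fun ε => ε ≠ 1),
              ε ^ i * (1 + ε ^ (-(a j : ℤ))) /
                ((1 - ε ^ (-(a j : ℤ))) ^ 2 *
                  ∏ l ∈ Finset.univ.erase j, (1 - ε ^ (-(a l : ℤ))))) * X ^ i) *
        ((1 - (X : ℂ[X]) ^ (a j)) * ∏ l, (1 - (X : ℂ[X]) ^ (a l))) -
        (1 + (X : ℂ[X]) ^ (a j))) := by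
  have hr0 : 0 < r := by omega
  rw [filter_ne',
    geom_sum_X_eq_prod_nthRootsFinset_erase_one hr0 (Complex.isPrimitiveRoot_exp r hr0.ne')]
  refine prod_X_sub_C_dvd_of_isRoot fun ζ hζ => ?_
  obtain ⟨hζ1, hζr⟩ : ζ ≠ 1 ∧ ζ ^ r = 1 := by simpa [mem_nthRootsFinset hr0] using hζ
  have hζ0 : ζ ≠ 0 := ne_zero_of_mem_nthRootsFinset one_ne_zero (mem_of_mem_erase hζ)
  have hinv : ζ⁻¹ ∈ (nthRootsFinset r (1 : ℂ)).erase 1 := by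
    simp [mem_nthRootsFinset hr0, hζr, hζ1]
  have hpow : ∀ l, 1 - ζ ^ a l ≠ 0 := fun l h =>
    hζ1 ((pow_eq_one_iff_of_coprime (hcop l)).mp ⟨(sub_eq_zero.mp h).symm, hζr⟩)
  simp_rw [IsRoot, eval_sub, eval_mul, eval_finsetSum, eval_mul, eval_C, eval_pow, eval_X,
    mul_assoc (1 / (r : ℂ)), ← mul_sum, mul_div_assoc]
  rw [sum_range_sum_pow_mul_mul_pow
    (fun ε hε => (mem_nthRootsFinset hr0 1).mp (mem_of_mem_erase hε)) _ hζr hζ0 hinv]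
  simp only [eval_sub, eval_add, eval_one, eval_pow, eval_X, eval_prod, inv_zpow', neg_neg,
    zpow_natCast]
  rw [sub_eq_zero, ← mul_prod_erase univ _ (mem_univ j)]
  field_simp [hpow, prod_ne_zero_iff.mpr fun l _ => hpow l, hr0.ne']

/-- For `r ≥ 2` and `a_1, …, a_m` positive integers coprime to `r`, the polynomial
`Σ_{i<r} δ_{i,j} t^i`, where
`δ_{i,j} = (1/r) Σ_{ε ∈ μ_r, ε ≠ 1} ε^i (1 + ε^{-a_j})/((1 - ε^{-a_j})² ∏_{l ≠ j}(1 - ε^{-a_l}))`,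
satisfies `(Σ_i δ_{i,j} t^i)·(1-t^{a_1})⋯(1-t^{a_j})²⋯(1-t^{a_m}) ≡ 1 + t^{a_j}`
modulo `(1-t^r)/(1-t)` in `ℂ[t]`. -/
theorem delta_inverse_mod (r m : ℕ) (hr : 2 ≤ r) (a : Fin m → ℕ)
    (ha : ∀ l, 0 < a l) (hcop : ∀ l, Nat.Coprime (a l) r) (j : Fin m) :
    (∑ i ∈ Finset.range r, (X : ℂ[X]) ^ i) ∣
      ((∑ i ∈ Finset.range r,
          Polynomial.C ((1 / r : ℂ) *
            ∑ ε ∈ (nthRootsFinset r (1 : ℂ)).filter (fun ε => ε ≠ 1),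
              ε ^ i * (1 + ε ^ (-(a j : ℤ))) /
                ((1 - ε ^ (-(a j : ℤ))) ^ 2 *
                  ∏ l ∈ Finset.univ.erase j, (1 - ε ^ (-(a l : ℤ))))) * X ^ i) *
        ((1 - (X : ℂ[X]) ^ (a j)) * ∏ l, (1 - (X : ℂ[X]) ^ (a l))) -
        (1 + (X : ℂ[X]) ^ (a j))) :=
  delta_inverse_mod_general r m hr a hcop j
end
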